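/- For every i ≥ 0 and every state s ∈ S: s ∈ W_i if and only if there exists a strategy g such that for every infinite sequence X₀, X₁, … of subsets of X there exists k with 0 ≤ k ≤ i such that the state s'_k of the induced run of g from s belongs to F; that is, W_i is exactly the set of states from which the controller can force acceptance within at most i steps. -/

import Mathlib

/-- The induced run of a strategy `g : (2^X)* → 2^Y` from state `s` on an
infinite input sequence `xs`:
`s'₀ = s`, `s'_{j+1} = δ(s'_j, X_j ∪ g(X₀,…,X_{j−1}))`. -/
def run {S X Y : Type} (δ : S → Set X → Set Y → S) (g : List (Set X) → Set Y)
    (s : S) (xs : ℕ → Set X) : ℕ → S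
  | 0 => s
  | j + 1 => δ (run δ g s xs j) (xs j) (g (List.ofFn fun m : Fin j => xs m))

/-- The fixpoint approximants `(T_i, W_i)`:
`T₀ = F × 2^Y`, `W₀ = F`,
`T_{i+1} = T_i ∪ {(s, Y') : s ∉ W_i and δ(s, X' ∪ Y') ∈ W_i for every X' ⊆ X}`,
`W_{i+1} = {s : (s, Y') ∈ T_{i+1} for some Y' ⊆ Y}`. -/
def TW {S X Y : Type} (δ : S → Set X → Set Y → S) (F : Set S) :
    ℕ → Set (S × Set Y) × Set S
  | 0 => ({p | p.1 ∈ F}, F)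
  | i + 1 =>
      let T := (TW δ F i).1
      let W := (TW δ F i).2
      let T' := T ∪ {p | p.1 ∉ W ∧ ∀ X' : Set X, δ p.1 X' p.2 ∈ W}
      (T', {s | ∃ Y' : Set Y, (s, Y') ∈ T'})

/-- `T_i`. -/
def Tset {S X Y : Type} (δ : S → Set X → Set Y → S) (F : Set S) (i : ℕ) :
    Set (S × Set Y) := (TW δ F i).1

/-- `W_i`. -/
def Wset {S X Y : Type} (δ : S → Set X → Set Y → S) (F : Set S) (i : ℕ) :
    Set S := (TW δ F i).2

/-!
Both sides obey the same one-step recursion. Forcing acceptance within `i + 1` steps from `s`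
means either forcing it within `i` steps, or having a first move `Y'` after which every input
`X'` leads to a state from which acceptance can be forced within `i` steps: a strategy splits
into its first move and its residual strategies `l ↦ g (X' :: l)`, and conversely a first move
glued to residual strategies chosen for each `X'` is a strategy. By construction `W_{i+1}` is
`W_i` together with the states having such a move into `W_i`.
-/

section Approximants

variable {S X Y : Type} (δ : S → Set X → Set Y → S) (F : Set S)

lemma mem_Wset_iff_exists_mem_Tset (i : ℕ) (s : S) :
    s ∈ Wset δ F i ↔ ∃ Y' : Set Y, (s, Y') ∈ Tset δ F i := by
  cases i with
  | zero => exact ⟨fun h => ⟨∅, h⟩, fun ⟨_, h⟩ => h⟩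
  | succ i => exact Iff.rfl

lemma mem_Wset_succ_iff (i : ℕ) (s : S) :
    s ∈ Wset δ F (i + 1) ↔
      s ∈ Wset δ F i ∨ ∃ Y' : Set Y, ∀ X' : Set X, δ s X' Y' ∈ Wset δ F i := by
  constructor
  · rintro ⟨Y', hT | ⟨-, hstep⟩⟩
    · exact Or.inl ((mem_Wset_iff_exists_mem_Tset δ F i s).2 ⟨Y', hT⟩)
    · exact Or.inr ⟨Y', hstep⟩
  · rintro (hW | ⟨Y', hstep⟩)
    · obtain ⟨Y', hT⟩ := (mem_Wset_iff_exists_mem_Tset δ F i s).1 hW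
      exact ⟨Y', Or.inl hT⟩
    · by_cases hW : s ∈ Wset δ F i
      · obtain ⟨Y'', hT⟩ := (mem_Wset_iff_exists_mem_Tset δ F i s).1 hW
        exact ⟨Y'', Or.inl hT⟩
      · exact ⟨Y', Or.inr ⟨hW, hstep⟩⟩

end Approximants

section Forcing

variable {S X Y : Type} (δ : S → Set X → Set Y → S)

lemma run_succ_eq_run_tail (g : List (Set X) → Set Y) (s : S) (xs : ℕ → Set X) (k : ℕ) :
    run δ g s xs (k + 1) =
      run δ (fun l => g (xs 0 :: l)) (δ s (xs 0) (g [])) (fun n => xs (n + 1)) k := by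
  induction k with
  | zero => rfl
  | succ k ih =>
    change δ (run δ g s xs (k + 1)) (xs (k + 1)) (g (List.ofFn fun m : Fin (k + 1) => xs m)) = _
    rw [ih, List.ofFn_succ]
    rfl

variable (F : Set S)

def ForcesWithin (i : ℕ) (s : S) : Prop :=
  ∃ g : List (Set X) → Set Y, ∀ xs : ℕ → Set X, ∃ k : ℕ, k ≤ i ∧ run δ g s xs k ∈ F

variable {δ F}

lemma ForcesWithin.mono {i j : ℕ} {s : S} (hij : i ≤ j) (h : ForcesWithin δ F i s) :
    ForcesWithin δ F j s := by
  obtain ⟨g, hg⟩ := h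
  refine ⟨g, fun xs => ?_⟩
  obtain ⟨k, hk, hF⟩ := hg xs
  exact ⟨k, hk.trans hij, hF⟩

lemma forcesWithin_zero_iff {s : S} : ForcesWithin δ F 0 s ↔ s ∈ F := by
  constructor
  · rintro ⟨g, hg⟩
    obtain ⟨k, hk, hF⟩ := hg fun _ => ∅
    rwa [Nat.le_zero.1 hk] at hF
  · exact fun hs => ⟨fun _ => ∅, fun _ => ⟨0, le_rfl, hs⟩⟩

lemma forcesWithin_of_mem {i : ℕ} {s : S} (hs : s ∈ F) : ForcesWithin δ F i s :=
  (forcesWithin_zero_iff.2 hs).mono i.zero_le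

lemma forcesWithin_succ_iff {i : ℕ} {s : S} :
    ForcesWithin δ F (i + 1) s ↔
      s ∈ F ∨ ∃ Y' : Set Y, ∀ X' : Set X, ForcesWithin δ F i (δ s X' Y') := by
  constructor
  · rintro ⟨g, hg⟩
    refine or_iff_not_imp_left.2 fun hs => ⟨g [], fun X' => ⟨fun l => g (X' :: l), fun xs => ?_⟩⟩
    obtain ⟨k, hk, hF⟩ := hg fun | 0 => X' | n + 1 => xs n
    cases k with
    | zero => exact absurd hF hs
    | succ k =>
      rw [run_succ_eq_run_tail] at hF
      exact ⟨k, Nat.le_of_succ_le_succ hk, hF⟩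
  · rintro (hs | ⟨Y', hstep⟩)
    · exact forcesWithin_of_mem hs
    choose h hh using hstep
    refine ⟨fun | [] => Y' | X₀ :: l => h X₀ l, fun xs => ?_⟩
    obtain ⟨k, hk, hF⟩ := hh (xs 0) fun n => xs (n + 1)
    exact ⟨k + 1, Nat.succ_le_succ hk, by rwa [run_succ_eq_run_tail]⟩

lemma forcesWithin_succ_iff_forcesWithin_or {i : ℕ} {s : S} :
    ForcesWithin δ F (i + 1) s ↔
      ForcesWithin δ F i s ∨ ∃ Y' : Set Y, ∀ X' : Set X, ForcesWithin δ F i (δ s X' Y') := by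
  rw [forcesWithin_succ_iff]
  constructor
  · exact Or.imp_left forcesWithin_of_mem
  · rintro (hs | hstep)
    · exact forcesWithin_succ_iff.1 (hs.mono i.le_succ)
    · exact Or.inr hstep

end Forcing

theorem approximant_iff_bounded_winning_general {S X Y : Type}
    (δ : S → Set X → Set Y → S) (F : Set S) (i : ℕ) (s : S) :
    s ∈ Wset δ F i ↔
      ∃ g : List (Set X) → Set Y,
        ∀ xs : ℕ → Set X, ∃ k : ℕ, k ≤ i ∧ run δ g s xs k ∈ F := by
  change s ∈ Wset δ F i ↔ ForcesWithin δ F i s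
  induction i generalizing s with
  | zero => exact forcesWithin_zero_iff.symm
  | succ i ih => simp only [mem_Wset_succ_iff, forcesWithin_succ_iff_forcesWithin_or, ih]

/-- For every `i ≥ 0` and every state `s`: `s ∈ W_i` iff there exists a
strategy `g` such that for every infinite input sequence there exists `k` with
`0 ≤ k ≤ i` such that the state `s'_k` of the induced run of `g` from `s`
belongs to `F`: `W_i` is exactly the set of states from which the controller
can force acceptance within at most `i` steps. -/
theorem approximant_iff_bounded_winning {S X Y : Type}
    [Fintype S] [Fintype X] [Fintype Y]
    (δ : S → Set X → Set Y → S) (s₀ : S) (F : Set S) (i : ℕ) (s : S) :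
    s ∈ Wset δ F i ↔
      ∃ g : List (Set X) → Set Y,
        ∀ xs : ℕ → Set X, ∃ k : ℕ, k ≤ i ∧ run δ g s xs k ∈ F :=
  approximant_iff_bounded_winning_general δ F i s
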